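/- For every β ∈ (β̄, μ_1) there exists a matrix T ∈ SO(n) (a real orthogonal n × n matrix of determinant 1) such that T⁻¹·C(β)·T = diag(3, f(β), …, f(β)). -/

import Mathlib

/-!
With `u k = (μ k - β)^(-1/2)` the matrix `D` is the rank-one perturbation `1 + β • u uᵀ`, and
`β ‖u‖² = g β - 1`, so `C = f • 1 + (3 - f) • v vᵀ` for the unit vector `v = u / ‖u‖`; here
`g β > 0` because `g` is strictly increasing on `(-∞, μ 0)` and vanishes at `β̄`. A product of two
Householder reflections is a rotation sending the first basis vector to `v`, and conjugating by it
turns `C` into `diag (3, f, …, f)`.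
-/

namespace Matrix

section Householder

variable {ι K : Type*} [Fintype ι] [DecidableEq ι] [Field K]

def householder (w : ι → K) : Matrix ι ι K := 1 - (2 / (w ⬝ᵥ w)) • vecMulVec w w

theorem householder_transpose (w : ι → K) : (householder w)ᵀ = householder w := by
  simp [householder]

theorem householder_mul_self {w : ι → K} (hw : w ⬝ᵥ w ≠ 0) :
    householder w * householder w = 1 := by
  have hsq : vecMulVec w w * vecMulVec w w = (w ⬝ᵥ w) • vecMulVec w w := by
    rw [vecMulVec_mul_vecMulVec, vecMulVec_smul]
  simp only [householder, sub_mul, mul_sub, one_mul, mul_one, smul_mul_smul, hsq, smul_smul]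
  have hc : 2 / (w ⬝ᵥ w) * (2 / (w ⬝ᵥ w)) * (w ⬝ᵥ w) = 2 / (w ⬝ᵥ w) + 2 / (w ⬝ᵥ w) := by
    field_simp; ring
  rw [hc, add_smul]
  abel

theorem householder_mem_orthogonalGroup {w : ι → K} (hw : w ⬝ᵥ w ≠ 0) :
    householder w ∈ orthogonalGroup ι K := by
  rw [mem_orthogonalGroup_iff, householder_transpose, householder_mul_self hw]

theorem det_householder {w : ι → K} (hw : w ⬝ᵥ w ≠ 0) : (householder w).det = -1 := by
  have hrank_one : householder w = 1 + replicateCol Unit (-(2 / (w ⬝ᵥ w)) • w) * replicateRow Unit w := by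
    rw [← vecMulVec_eq, smul_vecMulVec, neg_smul, householder, sub_eq_add_neg]
  rw [hrank_one, det_one_add_replicateCol_mul_replicateRow, dotProduct_smul, smul_eq_mul]
  field_simp
  ring

theorem householder_mulVec (w x : ι → K) :
    householder w *ᵥ x = x - (2 * (w ⬝ᵥ x) / (w ⬝ᵥ w)) • w := by
  rw [householder, sub_mulVec, one_mulVec, smul_mulVec, vecMulVec_mulVec, op_smul_eq_smul,
    smul_smul, mul_div_right_comm]

theorem householder_mulVec_of_dotProduct_eq_zero {w x : ι → K} (h : w ⬝ᵥ x = 0) :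
    householder w *ᵥ x = x := by
  simp [householder_mulVec, h]

theorem householder_sub_mulVec {x y : ι → K} (hxy : x ⬝ᵥ x = y ⬝ᵥ y)
    (h : (x - y) ⬝ᵥ (x - y) ≠ 0) : householder (x - y) *ᵥ x = y := by
  have hw : (x - y) ⬝ᵥ (x - y) = 2 * ((x - y) ⬝ᵥ x) := by
    simp only [sub_dotProduct, dotProduct_sub, dotProduct_comm y x, hxy]
    ring
  rw [householder_mulVec, ← hw, div_self h, one_smul, sub_sub_cancel]

theorem exists_mem_specialOrthogonalGroup_mulVec_single [Nontrivial ι] (i : ι) {v : ι → ℝ}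
    (hv : v ⬝ᵥ v = 1) : ∃ T ∈ specialOrthogonalGroup ι ℝ, T *ᵥ Pi.single i 1 = v := by
  by_cases hvi : Pi.single i 1 = v
  · exact ⟨1, one_mem _, by rw [one_mulVec, hvi]⟩
  obtain ⟨j, hji⟩ := exists_ne i
  have hw : (Pi.single i 1 - v) ⬝ᵥ (Pi.single i 1 - v) ≠ 0 := by
    rwa [Ne, dotProduct_self_eq_zero, sub_eq_zero]
  have hj : Pi.single j (1 : ℝ) ⬝ᵥ Pi.single j 1 ≠ 0 := by simp
  -- The reflection in `e_j` fixes `e_i` and makes the determinant `1`.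
  refine ⟨householder (Pi.single i 1 - v) * householder (Pi.single j 1), ?_, ?_⟩
  · rw [mem_specialOrthogonalGroup_iff, det_mul, det_householder hw, det_householder hj]
    exact ⟨mul_mem (householder_mem_orthogonalGroup hw) (householder_mem_orthogonalGroup hj),
      by norm_num⟩
  · rw [← mulVec_mulVec, householder_mulVec_of_dotProduct_eq_zero (x := Pi.single i 1)
      (by simp [hji]), householder_sub_mulVec (by simp [hv]) hw]

end Householder

theorem inv_mul_smul_one_add_smul_vecMulVec_mul {ι R : Type*} [Fintype ι] [DecidableEq ι]
    [CommRing R] {T : Matrix ι ι R} (hT : T ∈ orthogonalGroup ι R) (a b : R) (x : ι → R) :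
    T⁻¹ * (a • 1 + b • vecMulVec (T *ᵥ x) (T *ᵥ x)) * T = a • 1 + b • vecMulVec x x := by
  have hTT : Tᵀ * T = 1 := (mem_orthogonalGroup_iff' ι R).mp hT
  have hx : (T *ᵥ x) ᵥ* T = x := by rw [← mulVec_transpose, mulVec_mulVec, hTT, one_mulVec]
  rw [inv_eq_left_inv hTT, Matrix.mul_add, Matrix.add_mul, Matrix.mul_smul, Matrix.mul_smul,
    Matrix.smul_mul, Matrix.smul_mul, mul_one, hTT, mul_vecMulVec, vecMulVec_mul, hx,
    mulVec_mulVec, hTT, one_mulVec]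

theorem diagonal_ite_eq_smul_one_add_smul_vecMulVec {ι R : Type*} [DecidableEq ι] [CommRing R]
    (i : ι) (a b : R) :
    diagonal (fun k => if k = i then a else b) =
      b • 1 + (a - b) • vecMulVec (Pi.single i 1) (Pi.single i 1) := by
  rw [← single_eq_single_vecMulVec_single, smul_single, smul_eq_mul, mul_one, ← diagonal_single,
    smul_one_eq_diagonal, diagonal_add]
  congr 1
  funext k
  by_cases hk : k = i <;> simp [hk]

theorem exists_dotProduct_self_eq_one_vecMulVec_eq {ι : Type*} [Fintype ι] {u : ι → ℝ}
    (hu : 0 < u ⬝ᵥ u) : ∃ v, v ⬝ᵥ v = 1 ∧ vecMulVec u u = (u ⬝ᵥ u) • vecMulVec v v := by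
  refine ⟨(Real.sqrt (u ⬝ᵥ u))⁻¹ • u, ?_, ?_⟩
  · rw [smul_dotProduct, dotProduct_smul, smul_smul, smul_eq_mul, ← mul_inv,
      Real.mul_self_sqrt hu.le, inv_mul_cancel₀ hu.ne']
  · rw [smul_vecMulVec, vecMulVec_smul, smul_smul, smul_smul, mul_assoc, ← mul_inv,
      Real.mul_self_sqrt hu.le, mul_inv_cancel₀ hu.ne', one_smul]

end Matrix

open Matrix

theorem div_sub_lt_div_sub_of_lt {m x y : ℝ} (hm : 0 < m) (hxy : x < y) (hym : y < m) :
    x / (m - x) < y / (m - y) := by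
  rw [div_lt_div_iff₀ (by linarith) (by linarith)]
  nlinarith

theorem mul_sum_one_div_sub_lt_mul_sum_one_div_sub {ι : Type*} [Fintype ι] [Nonempty ι]
    {μ : ι → ℝ} (hμ : ∀ k, 0 < μ k) {x y : ℝ} (hxy : x < y) (hy : ∀ k, y < μ k) :
    x * ∑ k, 1 / (μ k - x) < y * ∑ k, 1 / (μ k - y) := by
  simp only [Finset.mul_sum, mul_one_div]
  exact Finset.sum_lt_sum_of_nonempty Finset.univ_nonempty
    fun k _ => div_sub_lt_div_sub_of_lt (hμ k) hxy (hy k)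

theorem eq_one_add_smul_vecMulVec_inv_sqrt {ι : Type*} [Fintype ι] [DecidableEq ι]
    {μ : ι → ℝ} {β : ℝ} (hβ : ∀ k, β < μ k) {D : Matrix ι ι ℝ}
    (hD : ∀ i j, D i j =
      if i = j then μ i / (μ i - β) else β / Real.sqrt ((μ i - β) * (μ j - β))) :
    D = 1 + β • vecMulVec (fun k => (Real.sqrt (μ k - β))⁻¹)
      (fun k => (Real.sqrt (μ k - β))⁻¹) := by
  ext i j
  have hi : 0 < μ i - β := sub_pos.mpr (hβ i)
  rw [hD, Matrix.add_apply, Matrix.smul_apply, vecMulVec_apply, smul_eq_mul, one_apply]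
  split_ifs with hij
  · subst hij
    rw [← mul_inv, Real.mul_self_sqrt hi.le]
    field_simp
    ring
  · rw [← mul_inv, ← Real.sqrt_mul hi.le, zero_add, div_eq_mul_inv]

/-- For every `β ∈ (β̄, μ 0)` there exists `T ∈ SO(n)` (real orthogonal with
determinant 1) such that `T⁻¹ C(β) T = diag(3, f(β), …, f(β))`. -/
theorem stmt_11 (n : ℕ) (hn : 2 ≤ n) (μ : Fin n → ℝ) (hμpos : ∀ k, 0 < μ k)
    (hμmono : Monotone μ) (g : ℝ → ℝ)
    (hg : ∀ β : ℝ, g β = 1 + β * ∑ k, 1 / (μ k - β))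
    (βbar : ℝ) (hβbarzero : g βbar = 0)
    (β : ℝ) (hβ : β ∈ Set.Ioo βbar (μ ⟨0, by omega⟩))
    (D : Matrix (Fin n) (Fin n) ℝ)
    (hD : ∀ i j, D i j =
      if i = j then μ i / (μ i - β) else β / Real.sqrt ((μ i - β) * (μ j - β)))
    (C : Matrix (Fin n) (Fin n) ℝ) (hC : C = 1 + (2 / g β) • D)
    (f : ℝ) (hf : f = 1 + 2 / g β) :
    ∃ T : Matrix (Fin n) (Fin n) ℝ,
      T * T.transpose = 1 ∧ T.det = 1 ∧
      T⁻¹ * C * T =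
        Matrix.diagonal (fun i : Fin n => if i = ⟨0, by omega⟩ then 3 else f) := by
  have : Nontrivial (Fin n) := Fin.nontrivial_iff_two_le.mpr hn
  have hβμ : ∀ k, β < μ k := fun k => hβ.2.trans_le (hμmono (Nat.zero_le k.val))
  set u : Fin n → ℝ := fun k => (Real.sqrt (μ k - β))⁻¹
  have hu : u ⬝ᵥ u = ∑ k, 1 / (μ k - β) := by
    refine Finset.sum_congr rfl fun k _ => ?_
    rw [← mul_inv, Real.mul_self_sqrt (sub_pos.mpr (hβμ k)).le, one_div]
  have hu_pos : 0 < u ⬝ᵥ u :=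
    hu ▸ Finset.sum_pos (fun k _ => one_div_pos.mpr (sub_pos.mpr (hβμ k))) Finset.univ_nonempty
  have hg_pos : 0 < g β := by
    rw [hg, ← hβbarzero, hg]
    linarith [mul_sum_one_div_sub_lt_mul_sum_one_div_sub hμpos hβ.1 hβμ]
  obtain ⟨v, hv, huv⟩ := exists_dotProduct_self_eq_one_vecMulVec_eq hu_pos
  have hCv : C = f • 1 + (3 - f) • vecMulVec v v := by
    have hDu : D = 1 + β • vecMulVec u u := eq_one_add_smul_vecMulVec_inv_sqrt hβμ hD
    have hβu : β * (u ⬝ᵥ u) = g β - 1 := by rw [hg, hu]; ring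
    rw [hC, hDu, huv, smul_smul, hβu, hf]
    match_scalars <;> field_simp
    ring
  obtain ⟨T, ⟨hT, hT_det⟩, hTv⟩ :=
    exists_mem_specialOrthogonalGroup_mulVec_single ⟨0, by omega⟩ hv
  refine ⟨T, (mem_orthogonalGroup_iff (Fin n) ℝ).mp hT, hT_det, ?_⟩
  rw [hCv, ← hTv, inv_mul_smul_one_add_smul_vecMulVec_mul hT,
    diagonal_ite_eq_smul_one_add_smul_vecMulVec]
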